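/- arXiv:0803.2294 — 2 statements merged into one kernel-verified Lean document; each statement's English description precedes it below -/
import Mathlib

section
/- Let c > 0, let u : [0,∞) → [0,∞) be continuous, let α ∈ C¹([0,∞),[0,∞)) be nondecreasing with α(t) ≤ t, let f, g : [0,∞) → [0,∞) be continuous, and let w : [0,∞) → [0,∞) be continuous nondecreasing with w(x) > 0 for x > 0. If u²(t) ≤ c² + 2∫_0^{α(t)} [f(s) u(s) w(u(s)) + g(s) u(s)] ds for all t ≥ 0, then with Ψ(x) = ∫_1^x ds/w(s), there exists τ > 0 such that u(t) ≤ Ψ⁻¹(Ψ(c + ∫_0^{α(t)} g(s) ds) + ∫_0^{α(t)} f(s) ds) for all t ∈ [0,τ] with the right-hand side well defined. -/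
open Set Filter intervalIntegral

open scoped Topology

/-!
Put `h = f·u·w(u) + g·u` and `v(x) = √(c² + 2∫₀ˣ h)`. As `α(t) ≤ t`, the hypothesis gives
`u ≤ v ∘ α ≤ v`, hence `v' = h / v ≤ f·w(v) + g`, and the square root disappears:
`v(x) ≤ (c + ∫₀^T g) + ∫₀ˣ f·w(v)` on `[0, T]`. Bihari's inequality turns this into
`Ψ(v(T)) ≤ Ψ(c + ∫₀^T g) + ∫₀^T f`. Finally `Ψ` grows by at least `1 / w(K)` on every unit
interval below a fixed `K`, while `∫₀^τ f → 0`; so for small `τ` the right-hand side is a value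
`Ψ(y)`, and `u(t) ≤ v(α t) ≤ y` because `Ψ` is increasing.
-/

theorem ContinuousOn.intervalIntegrable_of_ordConnected {p : ℝ → ℝ} {s : Set ℝ}
    (hs : s.OrdConnected) (hp : ContinuousOn p s) {a b : ℝ} (ha : a ∈ s) (hb : b ∈ s) :
    IntervalIntegrable p MeasureTheory.volume a b :=
  (hp.mono (hs.uIcc_subset ha hb)).intervalIntegrable

theorem ContinuousOn.hasDerivAt_integral_of_ordConnected {p : ℝ → ℝ} {s : Set ℝ}
    (hs : s.OrdConnected) (hp : ContinuousOn p s) {a x : ℝ} (ha : a ∈ s) (hx : s ∈ 𝓝 x) :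
    HasDerivAt (fun y => ∫ t in a..y, p t) (p x) x :=
  integral_hasDerivAt_right (hp.intervalIntegrable_of_ordConnected hs ha (mem_of_mem_nhds hx))
    ⟨s, hx, hp.aestronglyMeasurable hs.measurableSet⟩ (hp.continuousAt hx)

theorem ContinuousOn.continuousOn_integral_Icc {p : ℝ → ℝ} {a b : ℝ} (hab : a ≤ b)
    (hp : ContinuousOn p (Icc a b)) : ContinuousOn (fun x => ∫ t in a..x, p t) (Icc a b) := by
  simpa only [uIcc_of_le hab] using
    continuousOn_primitive_interval' (ContinuousOn.intervalIntegrable_of_Icc hab hp) left_mem_uIcc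

theorem ContinuousOn.nonneg_of_pos_Ioi {w : ℝ → ℝ} {a : ℝ} (hw : ContinuousOn w (Ici a))
    (hw_pos : ∀ x > a, 0 < w x) : ∀ x ≥ a, 0 ≤ w x := fun _ hx =>
  le_on_closure (f := 0) (fun y hy => (hw_pos y hy).le) continuousOn_const
    (closure_Ioi a ▸ hw) (closure_Ioi a ▸ hx)

theorem monotoneOn_integral_of_nonneg {p : ℝ → ℝ} {a : ℝ} (hp : ContinuousOn p (Ici a))
    (hp0 : ∀ s ≥ a, 0 ≤ p s) : MonotoneOn (fun x => ∫ t in a..x, p t) (Ici a) :=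
  fun _ hx _ hy hxy => integral_mono_interval le_rfl hx hxy
    (MeasureTheory.ae_restrict_of_forall_mem measurableSet_Ioc fun s hs => hp0 s hs.1.le)
    (hp.intervalIntegrable_of_ordConnected ordConnected_Ici self_mem_Ici hy)

section Bihari

variable {w Ψ : ℝ → ℝ}

theorem hasDerivAt_integral_one_div (hw : ContinuousOn w (Ioi 0)) (hw_pos : ∀ x > 0, 0 < w x)
    {a x : ℝ} (ha : 0 < a) (hx : 0 < x) :
    HasDerivAt (fun y => ∫ s in a..y, 1 / w s) (1 / w x) x :=
  (continuousOn_const.div hw fun y hy => (hw_pos y hy).ne').hasDerivAt_integral_of_ordConnected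
    ordConnected_Ioi ha (Ioi_mem_nhds hx)

theorem strictMonoOn_of_hasDerivAt_one_div (hw_pos : ∀ x > 0, 0 < w x)
    (hΨ : ∀ x > 0, HasDerivAt Ψ (1 / w x) x) : StrictMonoOn Ψ (Ioi 0) :=
  strictMonoOn_of_hasDerivWithinAt_pos (convex_Ioi 0) (HasDerivAt.continuousOn hΨ)
    (fun x hx => (hΨ x (interior_subset hx)).hasDerivWithinAt)
    (fun x hx => one_div_pos.2 (hw_pos x (interior_subset hx)))

theorem sub_div_le_sub_of_hasDerivAt_one_div (hw_mono : MonotoneOn w (Ioi 0))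
    (hw_pos : ∀ x > 0, 0 < w x) (hΨ : ∀ x > 0, HasDerivAt Ψ (1 / w x) x) {a b : ℝ} (ha : 0 < a)
    (hab : a ≤ b) : (b - a) / w b ≤ Ψ b - Ψ a := by
  have hb : 0 < b := ha.trans_le hab
  have h := integral_le_sub_of_hasDeriv_right_of_le hab
    ((HasDerivAt.continuousOn hΨ).mono fun x hx => ha.trans_le hx.1)
    (fun x hx => (hΨ x (ha.trans hx.1)).hasDerivWithinAt)
    (MeasureTheory.integrableOn_const (by simp)) (φ := fun _ => 1 / w b)
    (fun x hx => one_div_le_one_div_of_le (hw_pos x (ha.trans hx.1))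
      (hw_mono (ha.trans hx.1) hb hx.2.le))
  rwa [integral_const, smul_eq_mul, ← div_eq_mul_one_div] at h

theorem bihari {f v : ℝ → ℝ} {a b d : ℝ} (hab : a ≤ b)
    (hf : ContinuousOn f (Icc a b)) (hf0 : ∀ s ∈ Icc a b, 0 ≤ f s)
    (hw : ContinuousOn w (Ioi 0)) (hw_mono : MonotoneOn w (Ioi 0)) (hw_pos : ∀ x > 0, 0 < w x)
    (hΨ : ∀ x > 0, HasDerivAt Ψ (1 / w x) x)
    (hv : ContinuousOn v (Icc a b)) (hv_pos : ∀ x ∈ Icc a b, 0 < v x)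
    (hle : ∀ x ∈ Icc a b, v x ≤ d + ∫ s in a..x, f s * w (v s)) :
    Ψ (v b) ≤ Ψ d + ∫ s in a..b, f s := by
  have hd : 0 < d := by
    have := hle a (left_mem_Icc.2 hab)
    rw [integral_same, add_zero] at this
    exact (hv_pos a (left_mem_Icc.2 hab)).trans_le this
  set W := fun x => d + ∫ s in a..x, f s * w (v s)
  have hq : ContinuousOn (fun s => f s * w (v s)) (Icc a b) := hf.mul (hw.comp hv hv_pos)
  have hW : ∀ x ∈ Icc a b, 0 < W x := fun x hx => by
    have : 0 ≤ ∫ s in a..x, f s * w (v s) := integral_nonneg hx.1 fun s hs =>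
      mul_nonneg (hf0 s ⟨hs.1, hs.2.trans hx.2⟩) (hw_pos _ (hv_pos s ⟨hs.1, hs.2.trans hx.2⟩)).le
    positivity
  have hWd : ∀ x ∈ Ioo a b, HasDerivAt W (f x * w (v x)) x := fun x hx =>
    (hq.hasDerivAt_integral_of_ordConnected ordConnected_Icc (left_mem_Icc.2 hab)
      (Icc_mem_nhds hx.1 hx.2)).const_add d
  have hΨW : Ψ (W b) - Ψ (W a) ≤ ∫ s in a..b, f s := by
    refine sub_le_integral_of_hasDeriv_right_of_le hab
      ((HasDerivAt.continuousOn hΨ).comp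
        (continuousOn_const.add (hq.continuousOn_integral_Icc hab)) hW)
      (fun x hx => ((hΨ _ (hW x (Ioo_subset_Icc_self hx))).comp x (hWd x hx)).hasDerivWithinAt)
      hf.integrableOn_Icc fun x hx => ?_
    have hx' := Ioo_subset_Icc_self hx
    rw [one_div_mul_eq_div, div_le_iff₀ (hw_pos _ (hW x hx'))]
    exact mul_le_mul_of_nonneg_left (hw_mono (hv_pos x hx') (hW x hx') (hle x hx')) (hf0 x hx')
  have hWa : W a = d := by simp [W]
  have hvW : Ψ (v b) ≤ Ψ (W b) := (strictMonoOn_of_hasDerivAt_one_div hw_pos hΨ).monotoneOn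
    (hv_pos b (right_mem_Icc.2 hab)) (hW b (right_mem_Icc.2 hab)) (hle b (right_mem_Icc.2 hab))
  rw [hWa] at hΨW
  linarith

end Bihari

namespace OuIang

noncomputable def majorant (c : ℝ) (h : ℝ → ℝ) (x : ℝ) : ℝ :=
  √(c ^ 2 + 2 * ∫ s in (0:ℝ)..x, h s)

variable {c : ℝ} {h : ℝ → ℝ}

theorem majorant_zero (hc : 0 ≤ c) : majorant c h 0 = c := by
  simp [majorant, Real.sqrt_sq hc]

theorem le_majorant (hc : 0 < c) (hh0 : ∀ s ≥ 0, 0 ≤ h s) {x : ℝ} (hx : 0 ≤ x) :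
    c ≤ majorant c h x := by
  have : 0 ≤ ∫ s in (0:ℝ)..x, h s := integral_nonneg hx fun s hs => hh0 s hs.1
  exact (Real.le_sqrt' hc).2 (by linarith)

theorem majorant_pos (hc : 0 < c) (hh0 : ∀ s ≥ 0, 0 ≤ h s) {x : ℝ} (hx : 0 ≤ x) :
    0 < majorant c h x :=
  hc.trans_le (le_majorant hc hh0 hx)

theorem monotoneOn_majorant (hh : ContinuousOn h (Ici 0)) (hh0 : ∀ s ≥ 0, 0 ≤ h s) :
    MonotoneOn (majorant c h) (Ici 0) := fun x hx y hy hxy => by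
  have := monotoneOn_integral_of_nonneg hh hh0 hx hy hxy
  exact Real.sqrt_le_sqrt (by dsimp only at this; linarith)

theorem continuousOn_majorant (hh : ContinuousOn h (Ici 0)) {T : ℝ} (hT : 0 ≤ T) :
    ContinuousOn (majorant c h) (Icc 0 T) :=
  (continuousOn_const.add
    (continuousOn_const.mul ((hh.mono Icc_subset_Ici_self).continuousOn_integral_Icc hT))).sqrt

theorem hasDerivAt_majorant (hc : 0 < c) (hh : ContinuousOn h (Ici 0))
    (hh0 : ∀ s ≥ 0, 0 ≤ h s) {x : ℝ} (hx : 0 < x) :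
    HasDerivAt (majorant c h) (h x / majorant c h x) x := by
  have hz := ((hh.hasDerivAt_integral_of_ordConnected ordConnected_Ici self_mem_Ici
    (Ici_mem_nhds hx)).const_mul 2).const_add (c ^ 2)
  have hz0 : c ^ 2 + 2 * ∫ s in (0:ℝ)..x, h s ≠ 0 :=
    (Real.sqrt_pos.1 (majorant_pos hc hh0 hx.le)).ne'
  refine (hz.sqrt hz0).congr_deriv ?_
  rw [mul_div_mul_left _ _ two_ne_zero]
  rfl

theorem majorant_le_add_integral (hc : 0 < c) (hh : ContinuousOn h (Ici 0))
    (hh0 : ∀ s ≥ 0, 0 ≤ h s) {k : ℝ → ℝ} {x : ℝ} (hk : ContinuousOn k (Icc 0 x))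
    (hhk : ∀ s > 0, h s ≤ majorant c h s * k s) (hx : 0 ≤ x) :
    majorant c h x ≤ c + ∫ s in (0:ℝ)..x, k s := by
  have := sub_le_integral_of_hasDeriv_right_of_le hx (continuousOn_majorant hh hx)
    (fun s hs => (hasDerivAt_majorant hc hh hh0 hs.1).hasDerivWithinAt)
    hk.integrableOn_Icc
    (fun s hs => (div_le_iff₀' (majorant_pos hc hh0 hs.1.le)).2 (hhk s hs.1))
  rw [majorant_zero hc.le] at this
  linarith

theorem mul_mul_add_mul_le {w : ℝ → ℝ} (hw_mono : MonotoneOn w (Ici 0)) {f g u v : ℝ}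
    (hf : 0 ≤ f) (hg : 0 ≤ g) (hu : 0 ≤ u) (hw : 0 ≤ w u) (huv : u ≤ v) :
    f * u * w u + g * u ≤ v * (f * w v + g) := by
  have hwuv : w u ≤ w v := hw_mono hu (hu.trans huv) huv
  have : u * w u ≤ v * w v := mul_le_mul huv hwuv hw (hu.trans huv)
  nlinarith [mul_le_mul_of_nonneg_left this hf, mul_le_mul_of_nonneg_left huv hg]

theorem majorant_le_add_integral_mul_comp {f g w : ℝ → ℝ} (hc : 0 < c)
    (hh : ContinuousOn h (Ici 0)) (hh0 : ∀ s ≥ 0, 0 ≤ h s) (hf : ContinuousOn f (Ici 0))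
    (hg : ContinuousOn g (Ici 0)) (hg0 : ∀ s ≥ 0, 0 ≤ g s) (hw : ContinuousOn w (Ioi 0))
    (hhk : ∀ s > 0, h s ≤ majorant c h s * (f s * w (majorant c h s) + g s))
    {T x : ℝ} (hx : x ∈ Icc 0 T) :
    majorant c h x ≤ (c + ∫ s in (0:ℝ)..T, g s) + ∫ s in (0:ℝ)..x, f s * w (majorant c h s) := by
  have hfw : ContinuousOn (fun s => f s * w (majorant c h s)) (Icc 0 x) :=
    (hf.mono Icc_subset_Ici_self).mul
      (hw.comp (continuousOn_majorant hh hx.1) fun s hs => majorant_pos hc hh0 hs.1)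
  have hg' : ContinuousOn g (Icc 0 x) := hg.mono Icc_subset_Ici_self
  have hle := majorant_le_add_integral (k := fun s => f s * w (majorant c h s) + g s) hc hh hh0
    (hfw.add hg') hhk hx.1
  rw [integral_add (hfw.intervalIntegrable_of_Icc hx.1) (hg'.intervalIntegrable_of_Icc hx.1)]
    at hle
  have hG := monotoneOn_integral_of_nonneg hg hg0 hx.1 (hx.1.trans hx.2) hx.2
  dsimp only at hG
  linarith

theorem exists_pos_forall_exists_eq_add {f g w Ψ : ℝ → ℝ} {c : ℝ} (hc : 0 < c)
    (hf : ContinuousOn f (Ici 0)) (hf0 : ∀ s ≥ 0, 0 ≤ f s)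
    (hg : ContinuousOn g (Ici 0)) (hg0 : ∀ s ≥ 0, 0 ≤ g s)
    (hw_mono : MonotoneOn w (Ioi 0)) (hw_pos : ∀ x > 0, 0 < w x)
    (hΨ : ∀ x > 0, HasDerivAt Ψ (1 / w x) x) :
    ∃ τ > (0:ℝ), ∀ x ∈ Icc (0:ℝ) τ, ∃ y > (0:ℝ),
      Ψ y = Ψ (c + ∫ s in (0:ℝ)..x, g s) + ∫ s in (0:ℝ)..x, f s := by
  set K := c + (∫ s in (0:ℝ)..1, g s) + 1
  have hK : 0 < K := by
    have : 0 ≤ ∫ s in (0:ℝ)..1, g s := integral_nonneg zero_le_one fun s hs => hg0 s hs.1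
    positivity
  have hF : Tendsto (fun x => ∫ s in (0:ℝ)..x, f s) (𝓝[>] 0) (𝓝 0) := by
    have := (hf.mono Icc_subset_Ici_self).continuousOn_integral_Icc zero_le_one 0
      (left_mem_Icc.2 zero_le_one)
    simpa using this.tendsto.mono_left (nhdsWithin_le_of_mem (Icc_mem_nhdsGT one_pos))
  obtain ⟨τ, hFτ, hτ0, hτ1⟩ := ((hF.eventually (gt_mem_nhds (one_div_pos.2 (hw_pos K hK)))).and
    (Ioo_mem_nhdsGT one_pos)).exists
  refine ⟨τ, hτ0, fun x hx => ?_⟩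
  set d := c + ∫ s in (0:ℝ)..x, g s
  have hd : 0 < d := add_pos_of_pos_of_nonneg hc (integral_nonneg hx.1 fun s hs => hg0 s hs.1)
  have hdK : d + 1 ≤ K := by
    have := monotoneOn_integral_of_nonneg hg hg0 hx.1 (mem_Ici.2 zero_le_one) (hx.2.trans hτ1.le)
    dsimp only at this
    linarith
  have hF0 : 0 ≤ ∫ s in (0:ℝ)..x, f s := integral_nonneg hx.1 fun s hs => hf0 s hs.1
  have hFK : ∫ s in (0:ℝ)..x, f s ≤ Ψ K - Ψ d := calc
    _ ≤ ∫ s in (0:ℝ)..τ, f s := monotoneOn_integral_of_nonneg hf hf0 hx.1 hτ0.le hx.2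
    _ ≤ 1 / w K := hFτ.le
    _ ≤ (K - d) / w K := div_le_div_of_nonneg_right (by linarith) (hw_pos K hK).le
    _ ≤ Ψ K - Ψ d := sub_div_le_sub_of_hasDerivAt_one_div hw_mono hw_pos hΨ hd (by linarith)
  obtain ⟨y, hy, hΨy⟩ := intermediate_value_Icc (by linarith : d ≤ K)
    ((HasDerivAt.continuousOn hΨ).mono fun y hy => hd.trans_le hy.1)
    (⟨by linarith, by linarith⟩ : Ψ d + ∫ s in (0:ℝ)..x, f s ∈ Icc (Ψ d) (Ψ K))
  exact ⟨y, hd.trans_le hy.1, hΨy⟩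

end OuIang

-- Well-definedness of `Ψ⁻¹(Ψ(c + ∫₀^{α t} g) + ∫₀^{α t} f)` and the bound on `u t` are expressed
-- as `∃ y > 0, Ψ y = … ∧ u t ≤ y`.
theorem lipovan_ouiang_general (c : ℝ) (hc : 0 < c)
    (u α f g w Ψ : ℝ → ℝ)
    (hu_cont : ContinuousOn u (Ici 0)) (hu_nonneg : ∀ t ≥ (0:ℝ), 0 ≤ u t)
    (hα_nonneg : ∀ t ≥ (0:ℝ), 0 ≤ α t) (hα_le : ∀ t ≥ (0:ℝ), α t ≤ t)
    (hf_cont : ContinuousOn f (Ici 0)) (hf_nonneg : ∀ s ≥ (0:ℝ), 0 ≤ f s)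
    (hg_cont : ContinuousOn g (Ici 0)) (hg_nonneg : ∀ s ≥ (0:ℝ), 0 ≤ g s)
    (hw_cont : ContinuousOn w (Ici 0)) (hw_mono : MonotoneOn w (Ici 0))
    (hw_pos : ∀ x > (0:ℝ), 0 < w x)
    (hΨ : ∀ x, Ψ x = ∫ s in (1:ℝ)..x, 1 / w s)
    (hmain : ∀ t ≥ (0:ℝ),
      u t ^ 2 ≤ c ^ 2 + 2 *
        ∫ s in (0:ℝ)..(α t), (f s * u s * w (u s) + g s * u s)) :
    ∃ τ > (0:ℝ), ∀ t ∈ Icc (0:ℝ) τ,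
      ∃ y > (0:ℝ),
        Ψ y = Ψ (c + ∫ s in (0:ℝ)..(α t), g s) + (∫ s in (0:ℝ)..(α t), f s) ∧
        u t ≤ y := by
  have hw_nonneg : ∀ x ≥ (0:ℝ), 0 ≤ w x := hw_cont.nonneg_of_pos_Ioi hw_pos
  have hw_cont' : ContinuousOn w (Ioi 0) := hw_cont.mono Ioi_subset_Ici_self
  have hw_mono' : MonotoneOn w (Ioi 0) := hw_mono.mono Ioi_subset_Ici_self
  have hΨ' : ∀ x > (0:ℝ), HasDerivAt Ψ (1 / w x) x :=
    funext hΨ ▸ fun x hx => hasDerivAt_integral_one_div hw_cont' hw_pos one_pos hx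
  set h := fun s => f s * u s * w (u s) + g s * u s
  have hh : ContinuousOn h (Ici 0) :=
    ((hf_cont.mul hu_cont).mul (hw_cont.comp hu_cont hu_nonneg)).add (hg_cont.mul hu_cont)
  have hh0 : ∀ s ≥ (0:ℝ), 0 ≤ h s := fun s hs => by
    have := hw_nonneg _ (hu_nonneg s hs)
    have := hf_nonneg s hs; have := hg_nonneg s hs; have := hu_nonneg s hs
    positivity
  set v := OuIang.majorant c h
  have hu_le : ∀ t ≥ (0:ℝ), u t ≤ v (α t) := fun t ht => Real.le_sqrt_of_sq_le (hmain t ht)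
  have hhk : ∀ s > (0:ℝ), h s ≤ v s * (f s * w (v s) + g s) := fun s hs =>
    OuIang.mul_mul_add_mul_le hw_mono (hf_nonneg s hs.le) (hg_nonneg s hs.le) (hu_nonneg s hs.le)
      (hw_nonneg _ (hu_nonneg s hs.le)) ((hu_le s hs.le).trans
        (OuIang.monotoneOn_majorant hh hh0 (hα_nonneg s hs.le) hs.le (hα_le s hs.le)))
  obtain ⟨τ, hτ, hτy⟩ := OuIang.exists_pos_forall_exists_eq_add hc hf_cont hf_nonneg hg_cont
    hg_nonneg hw_mono' hw_pos hΨ'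
  refine ⟨τ, hτ, fun t ht => ?_⟩
  have hαt : α t ∈ Icc 0 τ := ⟨hα_nonneg t ht.1, (hα_le t ht.1).trans ht.2⟩
  obtain ⟨y, hy, hΨy⟩ := hτy (α t) hαt
  have hv_pos : ∀ x ∈ Icc (0:ℝ) (α t), 0 < v x := fun x hx => OuIang.majorant_pos hc hh0 hx.1
  have hΨv := bihari hαt.1 (hf_cont.mono Icc_subset_Ici_self) (fun s hs => hf_nonneg s hs.1)
    hw_cont' hw_mono' hw_pos hΨ' (OuIang.continuousOn_majorant hh hαt.1) hv_pos
    fun x hx => OuIang.majorant_le_add_integral_mul_comp hc hh hh0 hf_cont hg_cont hg_nonneg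
      hw_cont' hhk hx
  refine ⟨y, hy, hΨy, (hu_le t ht.1).trans ?_⟩
  exact ((strictMonoOn_of_hasDerivAt_one_div hw_pos hΨ').le_iff_le
    (hv_pos _ (right_mem_Icc.2 hαt.1)) hy).1 (hΨv.trans hΨy.ge)

/-- Lipovan's retarded Ou-Iang type inequality (case `m = 2`, `n = 1`).
Well-definedness of `Ψ⁻¹(Ψ(c + ∫₀^{α t} g) + ∫₀^{α t} f)` and the bound on
`u t` are expressed as `∃ y > 0, Ψ y = … ∧ u t ≤ y`. -/
theorem lipovan_ouiang (c : ℝ) (hc : 0 < c)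
    (u α f g w Ψ : ℝ → ℝ)
    (hu_cont : ContinuousOn u (Ici 0)) (hu_nonneg : ∀ t ≥ (0:ℝ), 0 ≤ u t)
    (hα_C1 : ContDiffOn ℝ 1 α (Ici 0)) (hα_mono : MonotoneOn α (Ici 0))
    (hα_nonneg : ∀ t ≥ (0:ℝ), 0 ≤ α t) (hα_le : ∀ t ≥ (0:ℝ), α t ≤ t)
    (hf_cont : ContinuousOn f (Ici 0)) (hf_nonneg : ∀ s ≥ (0:ℝ), 0 ≤ f s)
    (hg_cont : ContinuousOn g (Ici 0)) (hg_nonneg : ∀ s ≥ (0:ℝ), 0 ≤ g s)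
    (hw_cont : ContinuousOn w (Ici 0)) (hw_mono : MonotoneOn w (Ici 0))
    (hw_pos : ∀ x > (0:ℝ), 0 < w x)
    (hΨ : ∀ x, Ψ x = ∫ s in (1:ℝ)..x, 1 / w s)
    (hmain : ∀ t ≥ (0:ℝ),
      u t ^ 2 ≤ c ^ 2 + 2 *
        ∫ s in (0:ℝ)..(α t), (f s * u s * w (u s) + g s * u s)) :
    ∃ τ > (0:ℝ), ∀ t ∈ Icc (0:ℝ) τ,
      ∃ y > (0:ℝ),
        Ψ y = Ψ (c + ∫ s in (0:ℝ)..(α t), g s) + (∫ s in (0:ℝ)..(α t), f s) ∧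
        u t ≤ y :=
  lipovan_ouiang_general c hc u α f g w Ψ hu_cont hu_nonneg hα_nonneg hα_le hf_cont hf_nonneg
    hg_cont hg_nonneg hw_cont hw_mono hw_pos hΨ hmain
end

section
/- Let m > n > 0, c > 0, let u : [0,∞) → [0,∞) be continuous, let α ∈ C¹([0,∞),[0,∞)) be nondecreasing with α(t) ≤ t, let f, g : [0,∞) → [0,∞) be continuous, and let w : [0,∞) → [0,∞) be continuous nondecreasing with w(x) > 0 for x > 0. Suppose u^m(t) ≤ c^{m/(m−n)} + (m/(m−n)) (∫_0^{α(t)} f(s) uⁿ(s) w(u(s)) ds + ∫_0^t g(s) uⁿ(s) w(u(s)) ds) for all t ≥ 0. Define Ψ(x) = ∫_1^x ds/w(s^{1/(m−n)}). Then for every t ∈ [0,τ], where τ > 0 is such that Ψ(c) + ∫_0^{α(t)} f(s) ds + ∫_0^t g(s) ds lies in the domain of Ψ⁻¹ on [0,τ], one has u(t) ≤ [Ψ⁻¹(Ψ(c) + ∫_0^{α(t)} f(s) ds + ∫_0^t g(s) ds)]^{1/(m−n)}. -/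
open Set intervalIntegral

/-!
Bihari's argument. Let `z(t) = c^p + p (∫₀^{α t} f uⁿ w(u) + ∫₀^t g uⁿ w(u))` with `p = m/(m-n)`
be the right-hand side of the hypothesis, so that `u ≤ z^{1/m}` and `z` is nondecreasing. Then
`z' ≤ p M(z) (f(α) α' + g)` with `M(Z) = Z^{n/m} w(Z^{1/m})`, while
`d/dZ Ψ(Z^{(m-n)/m}) = 1 / (p M(Z))`. Hence `Ψ(z^{(m-n)/m}) - ∫₀^{α t} f - ∫₀^t g` is
nonincreasing, its value at `0` is `Ψ(c)`, and inverting the increasing function `Ψ` gives the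
bound.
-/

lemma monotoneOn_rpow_mul {w : ℝ → ℝ} {n : ℝ} (hn : 0 < n) (hw_mono : MonotoneOn w (Ici 0))
    (hw_pos : ∀ x > 0, 0 < w x) : MonotoneOn (fun a => a ^ n * w a) (Ici 0) := by
  intro a ha b hb hab
  rcases (mem_Ici.1 ha).eq_or_lt with rfl | ha'
  · have : 0 ≤ b ^ n * w b := by
      rcases (mem_Ici.1 hb).eq_or_lt with rfl | hb'
      · simp [Real.zero_rpow hn.ne']
      · exact mul_nonneg (Real.rpow_nonneg hb'.le n) (hw_pos b hb').le
    simpa [Real.zero_rpow hn.ne'] using this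
  · exact mul_le_mul (Real.rpow_le_rpow ha'.le hab hn.le) (hw_mono ha hb hab)
      (hw_pos a ha').le (Real.rpow_nonneg (ha'.le.trans hab) n)

lemma rpow_mul_nonneg {w : ℝ → ℝ} {n a : ℝ} (hn : 0 < n) (hw_mono : MonotoneOn w (Ici 0))
    (hw_pos : ∀ x > 0, 0 < w x) (ha : 0 ≤ a) : 0 ≤ a ^ n * w a := by
  simpa [Real.zero_rpow hn.ne'] using monotoneOn_rpow_mul hn hw_mono hw_pos self_mem_Ici ha ha

lemma rpow_mul_le_of_rpow_le {w : ℝ → ℝ} {m n a Z : ℝ} (hm : 0 < m) (hn : 0 < n)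
    (hw_mono : MonotoneOn w (Ici 0)) (hw_pos : ∀ x > 0, 0 < w x) (ha : 0 ≤ a) (haZ : a ^ m ≤ Z) :
    a ^ n * w a ≤ (Z ^ (1 / m)) ^ n * w (Z ^ (1 / m)) := by
  have hZ : 0 ≤ Z := (Real.rpow_nonneg ha m).trans haZ
  refine monotoneOn_rpow_mul hn hw_mono hw_pos ha (Real.rpow_nonneg hZ _) ?_
  rwa [one_div, Real.le_rpow_inv_iff_of_pos ha hZ hm]

lemma hasDerivAt_integral_of_continuousOn {ρ : ℝ → ℝ} {s : Set ℝ} {a b : ℝ}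
    (hρ : ContinuousOn ρ s) (hs : IsOpen s) (hab : uIcc a b ⊆ s) :
    HasDerivAt (fun x => ∫ r in a..x, ρ r) (ρ b) b :=
  integral_hasDerivAt_right ((hρ.mono hab).intervalIntegrable)
    (hρ.stronglyMeasurableAtFilter hs b (hab right_mem_uIcc))
    (hρ.continuousAt (hs.mem_nhds (hab right_mem_uIcc)))

lemma strictMonoOn_integral_of_pos {ρ : ℝ → ℝ} {s : Set ℝ} {a : ℝ} (hρ : ContinuousOn ρ s)
    (hs : IsOpen s) (hs_conv : Convex ℝ s) (ha : a ∈ s) (hρ_pos : ∀ x ∈ s, 0 < ρ x) :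
    StrictMonoOn (fun x => ∫ r in a..x, ρ r) s := by
  have hderiv : ∀ b ∈ s, HasDerivAt (fun x => ∫ r in a..x, ρ r) (ρ b) b := fun b hb =>
    hasDerivAt_integral_of_continuousOn hρ hs (hs_conv.ordConnected.uIcc_subset ha hb)
  refine strictMonoOn_of_hasDerivWithinAt_pos hs_conv (f' := ρ)
    (fun b hb => (hderiv b hb).continuousAt.continuousWithinAt) (fun b hb => ?_) (fun b hb => ?_)
  · rw [hs.interior_eq] at hb ⊢
    exact (hderiv b hb).hasDerivWithinAt
  · exact hρ_pos b (hs.interior_eq ▸ hb)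

lemma continuousOn_one_div_comp_rpow {w : ℝ → ℝ} {q : ℝ} (hw : ContinuousOn w (Ici 0))
    (hw_pos : ∀ x > 0, 0 < w x) : ContinuousOn (fun s => 1 / w (s ^ q)) (Ioi 0) :=
  continuousOn_const.div
    (hw.comp (continuousOn_id.rpow_const fun _ hx => Or.inl (ne_of_gt hx))
      fun _ hx => (Real.rpow_pos_of_pos hx q).le)
    fun _ hx => (hw_pos _ (Real.rpow_pos_of_pos hx q)).ne'

lemma hasDerivAt_integral_one_div_comp_rpow {w : ℝ → ℝ} {q b : ℝ} (hw : ContinuousOn w (Ici 0))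
    (hw_pos : ∀ x > 0, 0 < w x) (hb : 0 < b) :
    HasDerivAt (fun x => ∫ s in (1:ℝ)..x, 1 / w (s ^ q)) (1 / w (b ^ q)) b :=
  hasDerivAt_integral_of_continuousOn (continuousOn_one_div_comp_rpow hw hw_pos) isOpen_Ioi
    (ordConnected_Ioi.uIcc_subset one_pos hb)

lemma strictMonoOn_integral_one_div_comp_rpow {w : ℝ → ℝ} {q : ℝ} (hw : ContinuousOn w (Ici 0))
    (hw_pos : ∀ x > 0, 0 < w x) :
    StrictMonoOn (fun x => ∫ s in (1:ℝ)..x, 1 / w (s ^ q)) (Ioi 0) :=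
  strictMonoOn_integral_of_pos (continuousOn_one_div_comp_rpow hw hw_pos) isOpen_Ioi
    (convex_Ioi 0) (mem_Ioi.2 one_pos) fun _ hx =>
      one_div_pos.2 (hw_pos _ (Real.rpow_pos_of_pos hx q))

lemma hasDerivAt_comp_rpow_sub_div {Ψ w : ℝ → ℝ} {m n Z : ℝ} (hmn : n < m) (hn : 0 < n)
    (hZ : 0 < Z)
    (hΨ : HasDerivAt Ψ (1 / w ((Z ^ ((m - n) / m)) ^ (1 / (m - n)))) (Z ^ ((m - n) / m))) :
    HasDerivAt (fun x => Ψ (x ^ ((m - n) / m)))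
      (m / (m - n) * ((Z ^ (1 / m)) ^ n * w (Z ^ (1 / m))))⁻¹ Z := by
  have hk : 0 < m - n := sub_pos.2 hmn
  have hm : 0 < m := hn.trans hmn
  refine (hΨ.comp Z (Real.hasDerivAt_rpow_const (p := (m - n) / m) (Or.inl hZ.ne'))).congr_deriv ?_
  have hinner : (Z ^ ((m - n) / m)) ^ (1 / (m - n)) = Z ^ (1 / m) := by
    rw [← Real.rpow_mul hZ.le]; congr 1; field_simp
  have hpow : Z ^ ((m - n) / m - 1) = ((Z ^ (1 / m)) ^ n)⁻¹ := by
    rw [← Real.rpow_mul hZ.le, ← Real.rpow_neg hZ.le]; congr 1; field_simp; ring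
  rw [hinner, hpow]
  field_simp

lemma le_rpow_of_comp_rpow_le {Ψ : ℝ → ℝ} {m n a Z y : ℝ} (hmn : n < m) (hn : 0 < n)
    (hΨ : StrictMonoOn Ψ (Ioi 0)) (hZ : 0 < Z) (hy : 0 < y) (ha : 0 ≤ a) (haZ : a ^ m ≤ Z)
    (hΨZ : Ψ (Z ^ ((m - n) / m)) ≤ Ψ y) : a ≤ y ^ (1 / (m - n)) := by
  have hm : 0 < m := hn.trans hmn
  have hZy : Z ^ ((m - n) / m) ≤ y := (hΨ.le_iff_le (Real.rpow_pos_of_pos hZ _) hy).1 hΨZ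
  calc a ≤ Z ^ (1 / m) := by rwa [one_div, Real.le_rpow_inv_iff_of_pos ha hZ.le hm]
    _ = (Z ^ ((m - n) / m)) ^ (1 / (m - n)) := by
      rw [← Real.rpow_mul hZ.le]
      field_simp [(sub_pos.2 hmn).ne']
    _ ≤ y ^ (1 / (m - n)) :=
      Real.rpow_le_rpow (Real.rpow_nonneg hZ.le _) hZy (one_div_nonneg.2 (sub_pos.2 hmn).le)

lemma antitoneOn_comp_sub_of_deriv_le_mul {Φ φ z z' K k : ℝ → ℝ} {a b : ℝ}
    (hz : ContinuousOn z (Icc a b)) (hK : ContinuousOn K (Icc a b))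
    (hΦ : ∀ x ∈ Icc a b, HasDerivAt Φ (φ (z x))⁻¹ (z x))
    (hz' : ∀ x ∈ Ioo a b, HasDerivAt z (z' x) x) (hK' : ∀ x ∈ Ioo a b, HasDerivAt K (k x) x)
    (hφ : ∀ x ∈ Ioo a b, 0 < φ (z x)) (hle : ∀ x ∈ Ioo a b, z' x ≤ φ (z x) * k x) :
    AntitoneOn (fun x => Φ (z x) - K x) (Icc a b) := by
  refine antitoneOn_of_hasDerivWithinAt_nonpos (convex_Icc a b)
    (fun x hx => ((hΦ x hx).continuousAt.comp_continuousWithinAt (hz x hx)).sub (hK x hx))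
    (fun x hx => ?_) (fun x hx => ?_) (f' := fun x => (φ (z x))⁻¹ * z' x - k x)
  · rw [interior_Icc] at hx ⊢
    have hΦ' := (hΦ x (Ioo_subset_Icc_self hx)).comp x (hz' x hx)
    exact (hΦ'.sub (hK' x hx)).hasDerivWithinAt
  · rw [interior_Icc] at hx
    rw [sub_nonpos, inv_mul_le_iff₀ (hφ x hx)]
    exact hle x hx

noncomputable def retardedIntegral (α f g : ℝ → ℝ) (t : ℝ) : ℝ :=
  (∫ s in 0..α t, f s) + ∫ s in 0..t, g s

section retardedIntegral

variable {α f g : ℝ → ℝ}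

lemma retardedIntegral_zero (hα : α 0 = 0) : retardedIntegral α f g 0 = 0 := by
  simp [retardedIntegral, hα]

lemma hasDerivAt_retardedIntegral {α' x : ℝ} (hf : Continuous f) (hg : Continuous g)
    (hα : HasDerivAt α α' x) :
    HasDerivAt (retardedIntegral α f g) (f (α x) * α' + g x) x :=
  ((hf.integral_hasStrictDerivAt 0 (α x)).hasDerivAt.comp x hα).add
    (hg.integral_hasStrictDerivAt 0 x).hasDerivAt

lemma continuousOn_retardedIntegral {s : Set ℝ} (hf : Continuous f) (hg : Continuous g)
    (hα : ContinuousOn α s) : ContinuousOn (retardedIntegral α f g) s :=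
  ((continuous_primitive (fun a b => hf.intervalIntegrable a b) 0).comp_continuousOn hα).add
    (continuous_primitive (fun a b => hg.intervalIntegrable a b) 0).continuousOn

lemma monotoneOn_retardedIntegral {s : Set ℝ} (hf : Continuous f) (hg : Continuous g)
    (hf0 : ∀ s, 0 ≤ f s) (hg0 : ∀ s, 0 ≤ g s) (hα : MonotoneOn α s) :
    MonotoneOn (retardedIntegral α f g) s := by
  have hmono : ∀ {h : ℝ → ℝ}, Continuous h → (∀ s, 0 ≤ h s) →
      Monotone fun b => ∫ r in 0..b, h r :=
    fun hh hh0 => monotone_of_hasDerivAt_nonneg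
      (fun x => (hh.integral_hasStrictDerivAt 0 x).hasDerivAt) hh0
  exact fun a ha b hb hab => add_le_add (hmono hf hf0 (hα ha hb hab)) (hmono hg hg0 hab)

lemma retardedIntegral_comp_max_zero {t : ℝ} (ht : 0 ≤ t) (hαt : 0 ≤ α t) :
    retardedIntegral α (fun s => f (max s 0)) (fun s => g (max s 0)) t =
      retardedIntegral α f g t := by
  have hclamp : ∀ {h : ℝ → ℝ} {a : ℝ}, 0 ≤ a → ∫ s in 0..a, h (max s 0) = ∫ s in 0..a, h s :=
    fun ha => integral_congr fun s hs => by
      rw [uIcc_of_le ha] at hs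
      simp only [max_eq_left hs.1]
  simp only [retardedIntegral, hclamp ht, hclamp hαt]

end retardedIntegral

lemma comp_sub_retardedIntegral_le {Φ M α F G f g : ℝ → ℝ} {c₀ p t : ℝ} (hp : 0 < p)
    (ht : 0 ≤ t) (hF : Continuous F) (hG : Continuous G) (hf : Continuous f) (hg : Continuous g)
    (hα_C1 : ContDiffOn ℝ 1 α (Ici 0)) (hα_mono : MonotoneOn α (Ici 0))
    (hΦ : ∀ Z > 0, HasDerivAt Φ (p * M Z)⁻¹ Z) (hM : ∀ Z > 0, 0 < M Z)
    (hz : ∀ s ∈ Icc 0 t, 0 < c₀ + p * retardedIntegral α F G s)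
    (hFf : ∀ x ∈ Ioo 0 t, F (α x) ≤ f (α x) * M (c₀ + p * retardedIntegral α F G x))
    (hGg : ∀ x ∈ Ioo 0 t, G x ≤ g x * M (c₀ + p * retardedIntegral α F G x)) :
    Φ (c₀ + p * retardedIntegral α F G t) - retardedIntegral α f g t ≤
      Φ (c₀ + p * retardedIntegral α F G 0) - retardedIntegral α f g 0 := by
  have hα_cont : ContinuousOn α (Icc 0 t) := hα_C1.continuousOn.mono Icc_subset_Ici_self
  have hα_deriv : ∀ x ∈ Ioo 0 t, HasDerivAt α (deriv α x) x := fun x hx =>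
    ((hα_C1.differentiableOn one_ne_zero).differentiableAt (Ici_mem_nhds hx.1)).hasDerivAt
  have hα'_nonneg : ∀ x ∈ Ioo 0 t, 0 ≤ deriv α x := fun x hx => by
    rw [← derivWithin_of_mem_nhds (Ici_mem_nhds hx.1)]
    exact hα_mono.derivWithin_nonneg
  refine antitoneOn_comp_sub_of_deriv_le_mul (Φ := Φ) (φ := fun Z => p * M Z)
    (z := fun s => c₀ + p * retardedIntegral α F G s)
    (z' := fun x => p * (F (α x) * deriv α x + G x)) (k := fun x => f (α x) * deriv α x + g x)
    (continuousOn_const.add (continuousOn_const.mul (continuousOn_retardedIntegral hF hG hα_cont)))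
    (continuousOn_retardedIntegral hf hg hα_cont) (fun x hx => hΦ _ (hz x hx))
    (fun x hx => ((hasDerivAt_retardedIntegral hF hG (hα_deriv x hx)).const_mul p).const_add c₀)
    (fun x hx => hasDerivAt_retardedIntegral hf hg (hα_deriv x hx))
    (fun x hx => mul_pos hp (hM _ (hz x (Ioo_subset_Icc_self hx)))) (fun x hx => ?_)
    ⟨le_rfl, ht⟩ ⟨ht, le_rfl⟩ ht
  calc p * (F (α x) * deriv α x + G x)
    _ ≤ p * (f (α x) * M (c₀ + p * retardedIntegral α F G x) * deriv α x +
        g x * M (c₀ + p * retardedIntegral α F G x)) := by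
      gcongr
      exacts [hα'_nonneg x hx, hFf x hx, hGg x hx]
    _ = _ := by ring

theorem rpow_le_of_le_retardedIntegral {m n c t y : ℝ} {u α f g w Ψ : ℝ → ℝ}
    (hmn : n < m) (hn : 0 < n) (hc : 0 < c)
    (hu : Continuous u) (hu0 : ∀ s, 0 ≤ u s) (hf : Continuous f) (hf0 : ∀ s, 0 ≤ f s)
    (hg : Continuous g) (hg0 : ∀ s, 0 ≤ g s)
    (hα_C1 : ContDiffOn ℝ 1 α (Ici 0)) (hα_mono : MonotoneOn α (Ici 0))
    (hα_nonneg : ∀ s ≥ 0, 0 ≤ α s) (hα_le : ∀ s ≥ 0, α s ≤ s)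
    (hw : ContinuousOn w (Ici 0)) (hw_mono : MonotoneOn w (Ici 0)) (hw_pos : ∀ x > 0, 0 < w x)
    (hΨ : ∀ x, Ψ x = ∫ s in (1:ℝ)..x, 1 / w (s ^ (1 / (m - n))))
    (hmain : ∀ s ≥ 0, u s ^ m ≤ c ^ (m / (m - n)) + m / (m - n) *
      retardedIntegral α (fun r => f r * u r ^ n * w (u r)) (fun r => g r * u r ^ n * w (u r)) s)
    (ht : 0 ≤ t) (hy : 0 < y) (hΨy : Ψ y = Ψ c + retardedIntegral α f g t) :
    u t ≤ y ^ (1 / (m - n)) := by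
  have hm : 0 < m := hn.trans hmn
  have hΨ_eq : Ψ = fun x => ∫ s in (1:ℝ)..x, 1 / w (s ^ (1 / (m - n))) := funext hΨ
  set p := m / (m - n)
  have hp : 0 < p := div_pos hm (sub_pos.2 hmn)
  have hcont : ∀ {h : ℝ → ℝ}, Continuous h → Continuous fun r => h r * u r ^ n * w (u r) :=
    fun hh => (hh.mul (hu.rpow_const fun _ => Or.inr hn.le)).mul (hw.comp_continuous hu hu0)
  have hnonneg : ∀ {h : ℝ → ℝ}, (∀ s, 0 ≤ h s) → ∀ r, 0 ≤ h r * u r ^ n * w (u r) :=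
    fun hh0 r => by
      simpa only [mul_assoc] using mul_nonneg (hh0 r) (rpow_mul_nonneg hn hw_mono hw_pos (hu0 r))
  set z := fun s => c ^ p + p * retardedIntegral α (fun r => f r * u r ^ n * w (u r))
    (fun r => g r * u r ^ n * w (u r)) s
  have hα0 : α 0 = 0 := le_antisymm (hα_le 0 le_rfl) (hα_nonneg 0 le_rfl)
  have hz0 : z 0 = c ^ p := by simp [z, retardedIntegral_zero hα0]
  have hz_mono : MonotoneOn z (Ici 0) := fun a ha b hb hab => by
    have := monotoneOn_retardedIntegral (hcont hf) (hcont hg) (hnonneg hf0) (hnonneg hg0)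
      hα_mono ha hb hab
    simp only [z]; gcongr
  have hz_pos : ∀ s ≥ 0, 0 < z s := fun s hs =>
    (Real.rpow_pos_of_pos hc p).trans_le (hz0 ▸ hz_mono self_mem_Ici hs hs)
  set M := fun Z => (Z ^ (1 / m)) ^ n * w (Z ^ (1 / m))
  have hbound : ∀ {h : ℝ → ℝ}, (∀ s, 0 ≤ h s) → ∀ {r x : ℝ}, 0 ≤ r → r ≤ x →
      h r * u r ^ n * w (u r) ≤ h r * M (z x) := fun hh0 r x hr hrx => by
    simpa only [mul_assoc] using mul_le_mul_of_nonneg_left (rpow_mul_le_of_rpow_le hm hn hw_mono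
      hw_pos (hu0 r) ((hmain r hr).trans (hz_mono hr (hr.trans hrx) hrx))) (hh0 r)
  have hcomp : Ψ (z t ^ ((m - n) / m)) - retardedIntegral α f g t ≤
      Ψ (z 0 ^ ((m - n) / m)) - retardedIntegral α f g 0 :=
    comp_sub_retardedIntegral_le (Φ := fun Z => Ψ (Z ^ ((m - n) / m))) (M := M) hp ht
      (hcont hf) (hcont hg) hf hg hα_C1 hα_mono
      (fun Z hZ => hΨ_eq ▸ hasDerivAt_comp_rpow_sub_div hmn hn hZ
        (hasDerivAt_integral_one_div_comp_rpow hw hw_pos (Real.rpow_pos_of_pos hZ _)))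
      (fun Z hZ => mul_pos (Real.rpow_pos_of_pos (Real.rpow_pos_of_pos hZ _) _)
        (hw_pos _ (Real.rpow_pos_of_pos hZ _)))
      (fun s hs => hz_pos s hs.1)
      (fun x hx => hbound hf0 (hα_nonneg x hx.1.le) (hα_le x hx.1.le))
      (fun x hx => hbound hg0 hx.1.le le_rfl)
  have hz0_pow : z 0 ^ ((m - n) / m) = c := by
    rw [hz0, ← Real.rpow_mul hc.le, div_mul_div_cancel₀ (sub_pos.2 hmn).ne', div_self hm.ne',
      Real.rpow_one]
  rw [hz0_pow, retardedIntegral_zero hα0, sub_zero] at hcomp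
  exact le_rpow_of_comp_rpow_le hmn hn (hΨ_eq ▸ strictMonoOn_integral_one_div_comp_rpow hw hw_pos)
    (hz_pos t ht) hy (hu0 t) (hmain t ht) (by linarith)

theorem sun_thm22_general (m n c τ : ℝ) (hmn : n < m) (hn : 0 < n) (hc : 0 < c)
    (u α f g w Ψ : ℝ → ℝ)
    (hu_cont : ContinuousOn u (Ici 0)) (hu_nonneg : ∀ t ≥ (0:ℝ), 0 ≤ u t)
    (hα_C1 : ContDiffOn ℝ 1 α (Ici 0)) (hα_mono : MonotoneOn α (Ici 0))
    (hα_nonneg : ∀ t ≥ (0:ℝ), 0 ≤ α t) (hα_le : ∀ t ≥ (0:ℝ), α t ≤ t)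
    (hf_cont : ContinuousOn f (Ici 0)) (hf_nonneg : ∀ s ≥ (0:ℝ), 0 ≤ f s)
    (hg_cont : ContinuousOn g (Ici 0)) (hg_nonneg : ∀ s ≥ (0:ℝ), 0 ≤ g s)
    (hw_cont : ContinuousOn w (Ici 0)) (hw_mono : MonotoneOn w (Ici 0))
    (hw_pos : ∀ x > (0:ℝ), 0 < w x)
    (hΨ : ∀ x, Ψ x = ∫ s in (1:ℝ)..x, 1 / w (s ^ (1 / (m - n))))
    (hmain : ∀ t ≥ (0:ℝ),
      u t ^ m ≤ c ^ (m / (m - n)) + (m / (m - n)) *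
        ((∫ s in (0:ℝ)..(α t), f s * u s ^ n * w (u s)) +
          ∫ s in (0:ℝ)..t, g s * u s ^ n * w (u s)))
    (hdom : ∀ t ∈ Icc (0:ℝ) τ, ∃ y > (0:ℝ),
      Ψ y = Ψ c + (∫ s in (0:ℝ)..(α t), f s) + ∫ s in (0:ℝ)..t, g s) :
    ∀ t ∈ Icc (0:ℝ) τ,
      ∃ y > (0:ℝ),
        Ψ y = Ψ c + (∫ s in (0:ℝ)..(α t), f s) + (∫ s in (0:ℝ)..t, g s) ∧
        u t ≤ y ^ (1 / (m - n)) := by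
  intro t ht
  obtain ⟨y, hy, hΨy⟩ := hdom t ht
  refine ⟨y, hy, hΨy, ?_⟩
  -- Extending `u`, `f`, `g` to `ℝ` by their values at `0` makes their primitives
  -- differentiable at `0`, which `α t = 0` may require.
  have hclamp : ∀ {h : ℝ → ℝ}, ContinuousOn h (Ici 0) → Continuous fun s => h (max s 0) :=
    fun hh => hh.comp_continuous (continuous_id.max continuous_const) fun s => le_max_right s 0
  have hclamp_nonneg : ∀ {h : ℝ → ℝ}, (∀ s ≥ (0:ℝ), 0 ≤ h s) → ∀ s, 0 ≤ h (max s 0) :=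
    fun hh s => hh _ (le_max_right s 0)
  have hmain' : ∀ s ≥ (0:ℝ), u (max s 0) ^ m ≤ c ^ (m / (m - n)) + m / (m - n) *
      retardedIntegral α (fun r => f (max r 0) * u (max r 0) ^ n * w (u (max r 0)))
        (fun r => g (max r 0) * u (max r 0) ^ n * w (u (max r 0))) s := fun s hs => by
    rw [max_eq_left hs, retardedIntegral_comp_max_zero hs (hα_nonneg s hs)
      (f := fun r => f r * u r ^ n * w (u r)) (g := fun r => g r * u r ^ n * w (u r))]
    exact hmain s hs
  have hΨy' : Ψ y = Ψ c + retardedIntegral α (fun s => f (max s 0)) (fun s => g (max s 0)) t := by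
    rw [retardedIntegral_comp_max_zero ht.1 (hα_nonneg t ht.1), hΨy, retardedIntegral, add_assoc]
  simpa only [max_eq_left ht.1] using rpow_le_of_le_retardedIntegral hmn hn hc
    (hclamp hu_cont) (hclamp_nonneg hu_nonneg) (hclamp hf_cont) (hclamp_nonneg hf_nonneg)
    (hclamp hg_cont) (hclamp_nonneg hg_nonneg) hα_C1 hα_mono hα_nonneg hα_le
    hw_cont hw_mono hw_pos hΨ hmain' ht.1 hy hΨy'

/-- Sun's Theorem 2.2 (corollary of Theorem 2).  `τ > 0` is assumed chosen so
that `Ψ(c) + ∫₀^{α t} f + ∫₀^t g ∈ Dom(Ψ⁻¹)` on `[0,τ]` (expressed as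
`∃ y > 0, Ψ y = …`); the conclusion `u t ≤ [Ψ⁻¹(…)]^{1/(m-n)}` is expressed
via the same witness. -/
theorem sun_thm22 (m n c τ : ℝ) (hmn : n < m) (hn : 0 < n) (hc : 0 < c)
    (u α f g w Ψ : ℝ → ℝ)
    (hu_cont : ContinuousOn u (Ici 0)) (hu_nonneg : ∀ t ≥ (0:ℝ), 0 ≤ u t)
    (hα_C1 : ContDiffOn ℝ 1 α (Ici 0)) (hα_mono : MonotoneOn α (Ici 0))
    (hα_nonneg : ∀ t ≥ (0:ℝ), 0 ≤ α t) (hα_le : ∀ t ≥ (0:ℝ), α t ≤ t)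
    (hf_cont : ContinuousOn f (Ici 0)) (hf_nonneg : ∀ s ≥ (0:ℝ), 0 ≤ f s)
    (hg_cont : ContinuousOn g (Ici 0)) (hg_nonneg : ∀ s ≥ (0:ℝ), 0 ≤ g s)
    (hw_cont : ContinuousOn w (Ici 0)) (hw_mono : MonotoneOn w (Ici 0))
    (hw_pos : ∀ x > (0:ℝ), 0 < w x)
    (hΨ : ∀ x, Ψ x = ∫ s in (1:ℝ)..x, 1 / w (s ^ (1 / (m - n))))
    (hmain : ∀ t ≥ (0:ℝ),
      u t ^ m ≤ c ^ (m / (m - n)) + (m / (m - n)) *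
        ((∫ s in (0:ℝ)..(α t), f s * u s ^ n * w (u s)) +
          ∫ s in (0:ℝ)..t, g s * u s ^ n * w (u s)))
    (hτ : 0 < τ)
    (hdom : ∀ t ∈ Icc (0:ℝ) τ, ∃ y > (0:ℝ),
      Ψ y = Ψ c + (∫ s in (0:ℝ)..(α t), f s) + ∫ s in (0:ℝ)..t, g s) :
    ∀ t ∈ Icc (0:ℝ) τ,
      ∃ y > (0:ℝ),
        Ψ y = Ψ c + (∫ s in (0:ℝ)..(α t), f s) + (∫ s in (0:ℝ)..t, g s) ∧
        u t ≤ y ^ (1 / (m - n)) :=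
  sun_thm22_general m n c τ hmn hn hc u α f g w Ψ hu_cont hu_nonneg hα_C1 hα_mono hα_nonneg hα_le
    hf_cont hf_nonneg hg_cont hg_nonneg hw_cont hw_mono hw_pos hΨ hmain hdom
end
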